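/- There is an absolute constant C > 0 such that the following holds. Let ε ∈ (0,1/2], let P ⊂ ℝ^d be a finite set partitioned into clusters C_1,…,C_k with centers a_1,…,a_k, and let Ω ⊆ P with non-negative weights satisfy event E. Let S ⊂ ℝ^d be a finite set of centers and let C_j be a cluster that is far from S, i.e. cost(a_j,S) > Δ_j·ε^{-2} where Δ_j := cost(C_j,a_j)/|C_j|. Then |cost(C_j,S) − cost_Ω(C_j,S)| ≤ C·ε·cost(C_j,S), where cost_Ω(C_j,S) := ∑_{q∈Ω∩C_j} w_q·cost(q,S). -/

import Mathlib

open Finset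

noncomputable section

/-- `ℝ^d` as a Euclidean space. -/
abbrev Pt (d : ℕ) := EuclideanSpace ℝ (Fin d)

/-- `cost(p,S) = min_{s ∈ S} ‖p - s‖²`. -/
noncomputable def pcost {d : ℕ} (p : Pt d) (S : Finset (Pt d)) : ℝ :=
  sInf ((fun s => ‖p - s‖ ^ 2) '' (S : Set (Pt d)))

/-- `ℓ_max = ⌊log₂(1/ε)⌋`. -/
def lmax (ε : ℝ) : ℕ := (Int.log 2 ε⁻¹).toNat

/-- `p` belongs to the ring `R_j(ℓ)` of cluster `C_j` (where `C_j = {x ∈ P | cl x = j}`,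
with center `a j` and average cost `Δ_j`). -/
def inRing {d k : ℕ} (P : Finset (Pt d)) (cl : Pt d → Fin k) (a : Fin k → Pt d)
    (ε : ℝ) (j : Fin k) (ℓ : ℕ) (p : Pt d) : Prop :=
  let Δ : ℝ := (∑ x ∈ P.filter (fun x => cl x = j), ‖x - a j‖ ^ 2) /
      (((P.filter fun x => cl x = j).card : ℝ))
  cl p = j ∧
    ((ℓ = 0 ∧ ‖p - a j‖ ^ 2 < 2 * Δ) ∨
     (1 ≤ ℓ ∧ ℓ ≤ lmax ε ∧
        2 ^ ℓ * Δ ≤ ‖p - a j‖ ^ 2 ∧ ‖p - a j‖ ^ 2 < 2 ^ (ℓ + 1) * Δ) ∨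
     (ℓ = lmax ε + 1 ∧ 2 ^ (lmax ε + 1) * Δ ≤ ‖p - a j‖ ^ 2))

/-!
With `D = cost(a_j, S)`, the relaxed triangle inequality
`cost(p, S) ≤ (1 + t) cost(b, S) + (1 + 1/t) ‖p - b‖²` gives
`|cost(p, S) - D| ≤ ε D + (1 + 1/ε) ‖p - a_j‖²` for every point `p`. Summing it over `C_j` with
unit weights and over `Ω ∩ C_j` with the weights `w`, (P1) and (P3) put both `cost(C_j, S)` and
`cost_Ω(C_j, S)` within `O(ε |C_j| D)` of `|C_j| D`, since farness means
`∑_{p ∈ C_j} ‖p - a_j‖² ≤ ε² |C_j| D`. The same inequality with `t = 1` gives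
`|C_j| D ≤ 4 cost(C_j, S)`.
-/

lemma add_sq_le_one_add_mul_sq_add (a b : ℝ) {t : ℝ} (ht : 0 < t) :
    (a + b) ^ 2 ≤ (1 + t) * a ^ 2 + (1 + t⁻¹) * b ^ 2 := by
  have hsq : 0 ≤ t⁻¹ * (t * a - b) ^ 2 := by positivity
  have hexp : t⁻¹ * (t * a - b) ^ 2 = t * a ^ 2 - 2 * a * b + t⁻¹ * b ^ 2 := by
    field_simp
    ring
  nlinarith

lemma abs_sum_mul_sub_sum_mul_le {ι : Type*} (s : Finset ι) {w f g : ι → ℝ} (c : ℝ)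
    (hw : ∀ i ∈ s, 0 ≤ w i) (hfg : ∀ i ∈ s, |f i - c| ≤ g i) :
    |∑ i ∈ s, w i * f i - (∑ i ∈ s, w i) * c| ≤ ∑ i ∈ s, w i * g i := by
  rw [Finset.sum_mul, ← Finset.sum_sub_distrib]
  refine (Finset.abs_sum_le_sum_abs _ _).trans (Finset.sum_le_sum fun i hi => ?_)
  rw [← mul_sub, abs_mul, abs_of_nonneg (hw i hi)]
  exact mul_le_mul_of_nonneg_left (hfg i hi) (hw i hi)

lemma sum_le_sq_mul_card_mul_of_div_card_lt {ι : Type*} (s : Finset ι) (f : ι → ℝ)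
    {ε c : ℝ} (hε : ε ≠ 0) (h : (∑ i ∈ s, f i) / (#s : ℝ) * ε ^ (-2 : ℤ) < c) :
    ∑ i ∈ s, f i ≤ ε ^ 2 * #s * c := by
  rcases s.eq_empty_or_nonempty with rfl | hs
  · simp
  have hn : (0 : ℝ) < #s := by exact_mod_cast hs.card_pos
  rw [zpow_neg, zpow_two, ← sq, ← div_eq_mul_inv, div_div, div_lt_iff₀ (by positivity)] at h
  linarith

section pcost

variable {d : ℕ}

lemma pcost_nonneg (p : Pt d) (S : Finset (Pt d)) : 0 ≤ pcost p S :=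
  Real.sInf_nonneg (by rintro _ ⟨s, _, rfl⟩; positivity)

lemma pcost_le_of_mem (p : Pt d) {S : Finset (Pt d)} {s : Pt d} (hs : s ∈ S) :
    pcost p S ≤ ‖p - s‖ ^ 2 :=
  csInf_le (S.finite_toSet.image _).bddBelow ⟨s, hs, rfl⟩

lemma exists_mem_pcost_eq (p : Pt d) {S : Finset (Pt d)} (hS : S.Nonempty) :
    ∃ s ∈ S, pcost p S = ‖p - s‖ ^ 2 := by
  obtain ⟨s, hs, he⟩ :=
    (hS.to_set.image _).csInf_mem (S.finite_toSet.image (fun s => ‖p - s‖ ^ 2))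
  exact ⟨s, hs, he.symm⟩

lemma pcost_le_mul_pcost_add (p b : Pt d) (S : Finset (Pt d)) {t : ℝ} (ht : 0 < t) :
    pcost p S ≤ (1 + t) * pcost b S + (1 + t⁻¹) * ‖p - b‖ ^ 2 := by
  rcases S.eq_empty_or_nonempty with rfl | hS
  · simp only [pcost, Finset.coe_empty, Set.image_empty, Real.sInf_empty]
    positivity
  obtain ⟨s, hs, hbs⟩ := exists_mem_pcost_eq b hS
  calc pcost p S ≤ ‖p - s‖ ^ 2 := pcost_le_of_mem p hs
    _ ≤ (‖b - s‖ + ‖p - b‖) ^ 2 := by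
      gcongr
      linarith [norm_sub_le_norm_sub_add_norm_sub p b s]
    _ ≤ _ := by rw [hbs]; exact add_sq_le_one_add_mul_sq_add _ _ ht

lemma abs_pcost_sub_le (p b : Pt d) (S : Finset (Pt d)) {ε : ℝ} (hε₀ : 0 < ε) (hε₁ : ε < 1) :
    |pcost p S - pcost b S| ≤ ε * pcost b S + (1 + ε⁻¹) * ‖p - b‖ ^ 2 := by
  have hε₁' : 0 < 1 - ε := sub_pos.mpr hε₁
  have hup := pcost_le_mul_pcost_add p b S hε₀
  have hdown := pcost_le_mul_pcost_add b p S (div_pos hε₀ hε₁')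
  -- with `t = ε / (1 - ε)` the coefficients become `1 / (1 - ε)` and `1 / ε`
  rw [norm_sub_rev, show 1 + ε / (1 - ε) = (1 - ε)⁻¹ by field_simp; ring,
    show 1 + (ε / (1 - ε))⁻¹ = ε⁻¹ by field_simp; ring] at hdown
  have hdown' : (1 - ε) * pcost b S ≤ pcost p S + (1 - ε) * ε⁻¹ * ‖p - b‖ ^ 2 := by
    calc (1 - ε) * pcost b S
        ≤ (1 - ε) * ((1 - ε)⁻¹ * pcost p S + ε⁻¹ * ‖p - b‖ ^ 2) := by gcongr
      _ = _ := by field_simp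
  have : 0 ≤ ε⁻¹ * ‖p - b‖ ^ 2 := by positivity
  rw [abs_le]
  constructor <;> nlinarith

lemma abs_sum_mul_pcost_sub_le (s : Finset (Pt d)) {w : Pt d → ℝ} (hw : ∀ q ∈ s, 0 ≤ w q)
    (b : Pt d) (S : Finset (Pt d)) {ε : ℝ} (hε₀ : 0 < ε) (hε₁ : ε < 1) :
    |∑ q ∈ s, w q * pcost q S - (∑ q ∈ s, w q) * pcost b S|
      ≤ ε * (∑ q ∈ s, w q) * pcost b S + (1 + ε⁻¹) * ∑ q ∈ s, w q * ‖q - b‖ ^ 2 := by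
  refine (abs_sum_mul_sub_sum_mul_le s _ hw
    fun q _ => abs_pcost_sub_le q b S hε₀ hε₁).trans_eq ?_
  simp only [mul_add, Finset.sum_add_distrib, Finset.mul_sum, Finset.sum_mul]
  congr 1 <;> exact Finset.sum_congr rfl fun _ _ => by ring

lemma abs_sum_pcost_sub_le (s : Finset (Pt d)) (b : Pt d) (S : Finset (Pt d)) {ε : ℝ}
    (hε₀ : 0 < ε) (hε₁ : ε < 1) :
    |∑ p ∈ s, pcost p S - #s * pcost b S|
      ≤ ε * #s * pcost b S + (1 + ε⁻¹) * ∑ p ∈ s, ‖p - b‖ ^ 2 := by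
  simpa using abs_sum_mul_pcost_sub_le s (w := fun _ => 1) (by simp) b S hε₀ hε₁

lemma card_mul_pcost_le (s : Finset (Pt d)) (b : Pt d) (S : Finset (Pt d)) :
    #s * pcost b S ≤ 2 * ∑ p ∈ s, pcost p S + 2 * ∑ p ∈ s, ‖p - b‖ ^ 2 := by
  calc (#s : ℝ) * pcost b S = ∑ p ∈ s, pcost b S := by simp
    _ ≤ ∑ p ∈ s, (2 * pcost p S + 2 * ‖p - b‖ ^ 2) := Finset.sum_le_sum fun p _ => by
      simpa [norm_sub_rev b, one_add_one_eq_two] using pcost_le_mul_pcost_add b p S one_pos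
    _ = _ := by rw [Finset.sum_add_distrib, Finset.mul_sum, Finset.mul_sum]

lemma abs_sum_pcost_sub_sum_mul_pcost_le_of_far (s t : Finset (Pt d)) {w : Pt d → ℝ}
    (hw : ∀ q ∈ t, 0 ≤ w q) (b : Pt d) (S : Finset (Pt d)) {ε : ℝ} (hε₀ : 0 < ε)
    (hε : ε ≤ 1 / 2) (hmass_lo : (1 - ε) * #s ≤ ∑ q ∈ t, w q)
    (hmass_hi : ∑ q ∈ t, w q ≤ (1 + ε) * #s)
    (hmoment : ∑ q ∈ t, w q * ‖q - b‖ ^ 2 ≤ (1 + ε) * ∑ p ∈ s, ‖p - b‖ ^ 2)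
    (hfar : ∑ p ∈ s, ‖p - b‖ ^ 2 ≤ ε ^ 2 * #s * pcost b S) :
    |∑ p ∈ s, pcost p S - ∑ q ∈ t, w q * pcost q S| ≤ 29 * ε * ∑ p ∈ s, pcost p S := by
  have hε₁ : ε < 1 := by linarith
  have hA := abs_sum_pcost_sub_le s b S hε₀ hε₁
  have hB := abs_sum_mul_pcost_sub_le t hw b S hε₀ hε₁
  have hA_lo := card_mul_pcost_le s b S
  set D := pcost b S
  set A := ∑ p ∈ s, pcost p S
  set B := ∑ q ∈ t, w q * pcost q S
  set W := ∑ q ∈ t, w q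
  set T := ∑ p ∈ s, ‖p - b‖ ^ 2
  set Tw := ∑ q ∈ t, w q * ‖q - b‖ ^ 2
  set n : ℝ := (#s : ℝ)
  have hD : 0 ≤ D := pcost_nonneg b S
  have hnD : 0 ≤ n * D := mul_nonneg (Nat.cast_nonneg _) hD
  have hTE : (1 + ε⁻¹) * T ≤ (1 + ε) * (ε * n * D) :=
    calc (1 + ε⁻¹) * T ≤ (1 + ε⁻¹) * (ε ^ 2 * n * D) := by gcongr
      _ = (1 + ε) * (ε * n * D) := by field_simp; ring
  have hTwE : (1 + ε⁻¹) * Tw ≤ (1 + ε) ^ 2 * (ε * n * D) :=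
    calc (1 + ε⁻¹) * Tw ≤ (1 + ε) * ((1 + ε⁻¹) * T) := by
          rw [mul_left_comm]; gcongr
      _ ≤ (1 + ε) * ((1 + ε) * (ε * n * D)) := by gcongr
      _ = (1 + ε) ^ 2 * (ε * n * D) := by ring
  have hεWD := mul_le_mul_of_nonneg_left hmass_hi (mul_nonneg hε₀.le hD)
  have hnD_le : n * D ≤ 4 * A := by
    nlinarith [mul_le_mul_of_nonneg_right (show ε ^ 2 ≤ 1 / 4 by nlinarith) hnD]
  rw [abs_le] at hA hB ⊢
  constructor <;> nlinarith [mul_le_mul_of_nonneg_right hmass_lo hD,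
    mul_le_mul_of_nonneg_right hmass_hi hD]

end pcost

/-- Far-cluster lemma: if `Ω` satisfies event `E` (properties P1, P2, P3), then for any
solution `S` and any cluster `C_j` far from `S`, the coreset preserves the cost of `C_j`
up to a `C·ε` relative error. -/
theorem far_cluster_cost_preserved :
    ∃ C : ℝ, 0 < C ∧
      ∀ (d k : ℕ) (ε : ℝ) (P : Finset (Pt d)) (cl : Pt d → Fin k) (a : Fin k → Pt d)
        (Ω : Finset (Pt d)) (w : Pt d → ℝ) (j : Fin k) (S : Finset (Pt d)),
        0 < ε → ε ≤ 1 / 2 → Ω ⊆ P → (∀ q ∈ Ω, 0 ≤ w q) →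
        -- (P1) cluster size preservation
        (∀ j' : Fin k,
          (1 - ε) * (((P.filter fun p => cl p = j').card : ℝ))
              ≤ ∑ q ∈ Ω.filter (fun q => cl q = j'), w q ∧
          ∑ q ∈ Ω.filter (fun q => cl q = j'), w q
              ≤ (1 + ε) * (((P.filter fun p => cl p = j').card : ℝ))) →
        -- (P2) ring size preservation
        (∀ j' : Fin k, ∀ ℓ ≤ lmax ε + 1,
          (∑ q ∈ Ω, Set.indicator {q : Pt d | inRing P cl a ε j' ℓ q} w q)
            ≤ (((P.filter fun p => cl p = j').card : ℝ)) / 2 ^ ((ℓ : ℤ) - 1)) →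
        -- (P3) cluster cost preservation
        (∀ j' : Fin k,
          (1 - ε) * (∑ p ∈ P.filter (fun p => cl p = j'), ‖p - a j'‖ ^ 2)
              ≤ ∑ q ∈ Ω.filter (fun q => cl q = j'), w q * ‖q - a j'‖ ^ 2 ∧
          ∑ q ∈ Ω.filter (fun q => cl q = j'), w q * ‖q - a j'‖ ^ 2
              ≤ (1 + ε) * (∑ p ∈ P.filter (fun p => cl p = j'), ‖p - a j'‖ ^ 2)) →
        -- `C_j` is far from `S`: `cost(a_j,S) > Δ_j·ε^{-2}`
        ((∑ p ∈ P.filter (fun p => cl p = j), ‖p - a j‖ ^ 2) /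
            (((P.filter fun p => cl p = j).card : ℝ)) * ε ^ (-2 : ℤ)
          < pcost (a j) S) →
        |(∑ p ∈ P.filter (fun p => cl p = j), pcost p S) -
            ∑ q ∈ Ω.filter (fun q => cl q = j), w q * pcost q S|
          ≤ C * ε * ∑ p ∈ P.filter (fun p => cl p = j), pcost p S := by
  refine ⟨29, by norm_num, ?_⟩
  intro d k ε P cl a Ω w j S hε₀ hε _ hw hP1 _ hP3 hfar
  exact abs_sum_pcost_sub_sum_mul_pcost_le_of_far _ _
    (fun q hq => hw q (Finset.mem_filter.mp hq).1) (a j) S hε₀ hε (hP1 j).1 (hP1 j).2 (hP3 j).2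
    (sum_le_sq_mul_card_mul_of_div_card_lt _ _ hε₀.ne' hfar)
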